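/- Let C be a category equipped with a class of cofibrations and a class of fibrations satisfying the factorization axiom (every morphism from a cofibrant object to a fibrant object factors both as a cofibration followed by an acyclic fibration, and as an acyclic cofibration followed by a fibration), and in which every bifibrant object admits both a weak cylinder object and a weak path object. Let C^bf denote the full subcategory of bifibrant objects and let Q : C^bf → Ho(C^bf) denote the quotient functor onto the quotient category by the homotopy relation. Then Q sends every acyclic cofibration between bifibrant objects to an isomorphism, and Q exhibits Ho(C^bf) as the localization of C^bf at the class of acyclic cofibrations: any functor from C^bf which sends acyclic cofibrations to isomorphisms factors uniquely through Q. Dually, Q is also the localization of C^bf at the class of acyclic fibrations. -/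

import Mathlib

/-!
Lifting against the acyclic cofibration `X ⟶ I X` (resp. the acyclic fibration
`P Y ⟶ Y`) transports a homotopy relative to one weak cylinder or path object to any
other. Factoring the diagonal `Y ⟶ Y × Y` as an acyclic cofibration `ι` followed by a
fibration gives a genuine path object through which all homotopic maps are right
homotopic; a functor inverting `ι` identifies the two projections, hence identifies
homotopic maps, and the quotient functor is the localization at acyclic cofibrations.
The quotient functor does invert an acyclic cofibration `i` between bifibrant objects:
a retraction `r` of `i` exists, and `r ≫ i` is homotopic to `𝟙` because the two agree
after precomposition with `i`. The case of acyclic fibrations is dual, with a genuine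
cylinder obtained by factoring the codiagonal.
-/

open CategoryTheory CategoryTheory.Limits

universe w v u

namespace WMC

variable {C : Type u} [Category.{v} C]

def Cofibrant [HasInitial C] (Cof : MorphismProperty C) (X : C) : Prop :=
  Cof (initial.to X)

def Fibrant [HasTerminal C] (Fib : MorphismProperty C) (X : C) : Prop :=
  Fib (terminal.from X)

structure IsCofClass [HasInitial C] (Cof : MorphismProperty C) : Prop where
  initial_cofibrant : Cofibrant Cof (⊥_ C)
  iso_mem : ∀ {X Y : C} (f : X ⟶ Y), IsIso f → Cofibrant Cof X → Cof f
  comp_mem : ∀ {X Y Z : C} (f : X ⟶ Y) (g : Y ⟶ Z), Cof f → Cof g → Cof (f ≫ g)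
  pushout_mem : ∀ {A B X : C} (i : A ⟶ B) (f : A ⟶ X), Cof i → Cofibrant Cof A →
    Cofibrant Cof X →
    ∃ (P : C) (inl : X ⟶ P) (inr : B ⟶ P), IsPushout f i inl inr ∧ Cof inl

structure IsFibClass [HasTerminal C] (Fib : MorphismProperty C) : Prop where
  terminal_fibrant : Fibrant Fib (⊤_ C)
  iso_mem : ∀ {X Y : C} (f : X ⟶ Y), IsIso f → Fibrant Fib Y → Fib f
  comp_mem : ∀ {X Y Z : C} (f : X ⟶ Y) (g : Y ⟶ Z), Fib f → Fib g → Fib (f ≫ g)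
  pullback_mem : ∀ {A B X : C} (p : B ⟶ A) (f : X ⟶ A), Fib p → Fibrant Fib A →
    Fibrant Fib X →
    ∃ (P : C) (fst : P ⟶ X) (snd : P ⟶ B), IsPullback fst snd f p ∧ Fib fst

variable [HasInitial C] [HasTerminal C]

def IsAcyclicFib (Cof Fib : MorphismProperty C) {X Y : C} (p : X ⟶ Y) : Prop :=
  Fib p ∧ ∀ {A B : C} (i : A ⟶ B), Cof i → Cofibrant Cof A → Cofibrant Cof B →
    HasLiftingProperty i p

def IsAcyclicCof (Cof Fib : MorphismProperty C) {A B : C} (i : A ⟶ B) : Prop :=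
  Cof i ∧ ∀ {X Y : C} (p : X ⟶ Y), Fib p → Fibrant Fib X → Fibrant Fib Y →
    HasLiftingProperty i p

/-- `Cyl` and `D` are the paper's `I X` and `D X`; the coproduct `X ⊔ X` is part of the data. -/
structure WeakCylinder (Cof Fib : MorphismProperty C) (X : C) where
  XX : C
  in₀ : X ⟶ XX
  in₁ : X ⟶ XX
  isCoprod : IsColimit (BinaryCofan.mk in₀ in₁)
  Cyl : C
  D : C
  ι : XX ⟶ Cyl
  ρ : Cyl ⟶ D
  e : X ⟶ D
  ι_cof : Cof ι
  in₀_ι_acyclic : IsAcyclicCof Cof Fib (in₀ ≫ ι)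
  e_acyclic : IsAcyclicCof Cof Fib e
  fac₀ : in₀ ≫ ι ≫ ρ = e
  fac₁ : in₁ ≫ ι ≫ ρ = e

/-- `Pth` is the paper's `P Y`; the product `Y × Y` is part of the data. -/
structure WeakPath (Cof Fib : MorphismProperty C) (Y : C) where
  YY : C
  pr₀ : YY ⟶ Y
  pr₁ : YY ⟶ Y
  isProd : IsLimit (BinaryFan.mk pr₀ pr₁)
  Pth : C
  T : C
  π : Pth ⟶ YY
  σ : T ⟶ Pth
  e : T ⟶ Y
  π_fib : Fib π
  π_pr₀_acyclic : IsAcyclicFib Cof Fib (π ≫ pr₀)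
  e_acyclic : IsAcyclicFib Cof Fib e
  fac₀ : σ ≫ π ≫ pr₀ = e
  fac₁ : σ ≫ π ≫ pr₁ = e

/-- `f` and `g` are homotopic relative to the weak cylinder object `W`:
the map `(f, g) : X ⊔ X ⟶ Y` factors through `ι : X ⊔ X ⟶ I X`. -/
def CylHomotopic {Cof Fib : MorphismProperty C} {X Y : C}
    (W : WeakCylinder Cof Fib X) (f g : X ⟶ Y) : Prop :=
  ∃ h : W.Cyl ⟶ Y, W.in₀ ≫ W.ι ≫ h = f ∧ W.in₁ ≫ W.ι ≫ h = g

/-- `f` and `g` are homotopic relative to the weak path object `P`: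
the map `(f, g) : X ⟶ Y × Y` factors through `π : P Y ⟶ Y × Y`. -/
def PathHomotopic {Cof Fib : MorphismProperty C} {X Y : C}
    (P : WeakPath Cof Fib Y) (f g : X ⟶ Y) : Prop :=
  ∃ h : X ⟶ P.Pth, h ≫ P.π ≫ P.pr₀ = f ∧ h ≫ P.π ≫ P.pr₁ = g

def Homotopic (Cof Fib : MorphismProperty C) {X Y : C} (f g : X ⟶ Y) : Prop :=
  (∃ W : WeakCylinder Cof Fib X, CylHomotopic W f g) ∨
  (∃ P : WeakPath Cof Fib Y, PathHomotopic P f g)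

abbrev BF (Cof Fib : MorphismProperty C) : Type u :=
  ObjectProperty.FullSubcategory (fun X : C => Cofibrant Cof X ∧ Fibrant Fib X)

def homotopyRel (Cof Fib : MorphismProperty C) : HomRel (BF Cof Fib) :=
  fun _ _ f g =>
    Homotopic Cof Fib ((ObjectProperty.ι _).map f) ((ObjectProperty.ι _).map g)

def bfAcyclicCof (Cof Fib : MorphismProperty C) : MorphismProperty (BF Cof Fib) :=
  fun _ _ f => IsAcyclicCof Cof Fib ((ObjectProperty.ι _).map f)

def bfAcyclicFib (Cof Fib : MorphismProperty C) : MorphismProperty (BF Cof Fib) :=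
  fun _ _ f => IsAcyclicFib Cof Fib ((ObjectProperty.ι _).map f)

end WMC

open HomotopicalAlgebra

namespace CategoryTheory.Quotient

variable {D : Type*} [Category D] {r : HomRel D} {W : MorphismProperty D}

def strictUniversalPropertyFixedTargetOfPathObjects (hW : W.IsInvertedBy (functor r))
    (hr : ∀ ⦃X Y : D⦄ (f₀ f₁ : X ⟶ Y), r f₀ f₁ →
      ∃ (P : PrepathObject Y) (_ : P.RightHomotopy f₀ f₁), W P.ι)
    (E : Type*) [Category E] :
    Localization.StrictUniversalPropertyFixedTarget (functor r) W E where
  inverts := hW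
  lift F hF := lift r F fun _ _ f₀ f₁ hf => by
    obtain ⟨P, ⟨h, rfl, rfl⟩, hι⟩ := hr f₀ f₁ hf
    have := hF _ hι
    have hp : F.map P.p₀ = F.map P.p₁ := by
      rw [← cancel_epi (F.map P.ι), ← F.map_comp, ← F.map_comp, P.ι_p₀, P.ι_p₁]
    rw [F.map_comp, F.map_comp, hp]
  fac F _ := lift_spec r F _
  uniq F₁ F₂ h := lift_unique' r F₁ F₂ h

/- Path-object dual of `Quotient.isLocalization_functor`; the library's version
`Quotient.isLocalization_functor'` assumes `Congruence r`, which is not needed. -/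
lemma isLocalization_functor_of_exists_pathObjects (hW : W.IsInvertedBy (functor r))
    (hr : ∀ ⦃X Y : D⦄ (f₀ f₁ : X ⟶ Y), r f₀ f₁ →
      ∃ (P : PrepathObject Y) (_ : P.RightHomotopy f₀ f₁), W P.ι) :
    (functor r).IsLocalization W :=
  .mk' _ _ (strictUniversalPropertyFixedTargetOfPathObjects hW hr _)
    (strictUniversalPropertyFixedTargetOfPathObjects hW hr _)

end CategoryTheory.Quotient

namespace WMC

variable {C : Type u} [Category.{v} C] {Cof Fib : MorphismProperty C}

lemma Cofibrant.of_cof [HasInitial C] (hCof : IsCofClass Cof) {X Y : C} {f : X ⟶ Y}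
    (hX : Cofibrant Cof X) (hf : Cof f) : Cofibrant Cof Y := by
  simpa only [Cofibrant, initial.to_comp] using hCof.comp_mem _ f hX hf

lemma Fibrant.of_fib [HasTerminal C] (hFib : IsFibClass Fib) {X Y : C} {f : X ⟶ Y}
    (hY : Fibrant Fib Y) (hf : Fib f) : Fibrant Fib X := by
  simpa only [Fibrant, terminal.comp_from] using hFib.comp_mem f _ hf hY

lemma IsAcyclicCof.exists_extension [HasTerminal C] (hFib : IsFibClass Fib) {A B Y : C}
    {i : A ⟶ B} (hi : IsAcyclicCof Cof Fib i) (hY : Fibrant Fib Y) (f : A ⟶ Y) :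
    ∃ g : B ⟶ Y, i ≫ g = f := by
  have := hi.2 (terminal.from Y) hY hY hFib.terminal_fibrant
  have sq : CommSq f i (terminal.from Y) (terminal.from B) := ⟨terminal.hom_ext _ _⟩
  exact ⟨sq.lift, sq.fac_left⟩

lemma IsAcyclicFib.exists_lift [HasInitial C] (hCof : IsCofClass Cof) {X Y A : C}
    {p : X ⟶ Y} (hp : IsAcyclicFib Cof Fib p) (hA : Cofibrant Cof A) (f : A ⟶ Y) :
    ∃ g : A ⟶ X, g ≫ p = f := by
  have := hp.2 (initial.to A) hA hCof.initial_cofibrant hA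
  have sq : CommSq (initial.to X) (initial.to A) p f := ⟨initial.hom_ext _ _⟩
  exact ⟨sq.lift, sq.fac_right⟩

lemma WeakCylinder.exists_const [HasTerminal C] (hFib : IsFibClass Fib) {X Y : C}
    (hY : Fibrant Fib Y) (W : WeakCylinder Cof Fib X) (f : X ⟶ Y) :
    ∃ c : W.Cyl ⟶ Y, W.in₀ ≫ W.ι ≫ c = f ∧ W.in₁ ≫ W.ι ≫ c = f := by
  obtain ⟨g, hg⟩ := W.e_acyclic.exists_extension hFib hY f
  exact ⟨W.ρ ≫ g, by rw [reassoc_of% W.fac₀, hg], by rw [reassoc_of% W.fac₁, hg]⟩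

lemma WeakPath.exists_const [HasInitial C] (hCof : IsCofClass Cof) {A Y : C}
    (hA : Cofibrant Cof A) (P : WeakPath Cof Fib Y) (f : A ⟶ Y) :
    ∃ c : A ⟶ P.Pth, c ≫ P.π ≫ P.pr₀ = f ∧ c ≫ P.π ≫ P.pr₁ = f := by
  obtain ⟨g, hg⟩ := P.e_acyclic.exists_lift hCof hA f
  exact ⟨g ≫ P.σ, by rw [Category.assoc, P.fac₀, hg], by rw [Category.assoc, P.fac₁, hg]⟩

lemma IsAcyclicCof.exists_lift_pair [HasTerminal C] (hFib : IsFibClass Fib)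
    {A B Y YY P : C} {i : A ⟶ B} (hi : IsAcyclicCof Cof Fib i) {pr₀ pr₁ : YY ⟶ Y}
    (hYY : IsLimit (BinaryFan.mk pr₀ pr₁)) (hYYf : Fibrant Fib YY) {π : P ⟶ YY} (hπ : Fib π)
    {u v : B ⟶ Y} {c : A ⟶ P} (hc₀ : c ≫ π ≫ pr₀ = i ≫ u) (hc₁ : c ≫ π ≫ pr₁ = i ≫ v) :
    ∃ k : B ⟶ P, k ≫ π ≫ pr₀ = u ∧ k ≫ π ≫ pr₁ = v := by
  obtain ⟨m, hm₀, hm₁⟩ : {m : B ⟶ YY // m ≫ pr₀ = u ∧ m ≫ pr₁ = v} :=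
    BinaryFan.IsLimit.lift' hYY u v
  have := hi.2 π hπ (hYYf.of_fib hFib hπ) hYYf
  have sq : CommSq c i π m := ⟨BinaryFan.IsLimit.hom_ext hYY
    (by simpa [hm₀] using hc₀) (by simpa [hm₁] using hc₁)⟩
  exact ⟨sq.lift, by rw [sq.fac_right_assoc, hm₀], by rw [sq.fac_right_assoc, hm₁]⟩

lemma IsAcyclicFib.exists_desc_pair [HasInitial C] (hCof : IsCofClass Cof)
    {A X Y XX I : C} {p : X ⟶ Y} (hp : IsAcyclicFib Cof Fib p) {in₀ in₁ : A ⟶ XX}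
    (hXX : IsColimit (BinaryCofan.mk in₀ in₁)) (hXXc : Cofibrant Cof XX) {j : XX ⟶ I}
    (hj : Cof j) {u v : A ⟶ X} {c : I ⟶ Y} (hc₀ : in₀ ≫ j ≫ c = u ≫ p)
    (hc₁ : in₁ ≫ j ≫ c = v ≫ p) :
    ∃ H : I ⟶ X, in₀ ≫ j ≫ H = u ∧ in₁ ≫ j ≫ H = v := by
  obtain ⟨m, hm₀, hm₁⟩ : {m : XX ⟶ X // in₀ ≫ m = u ∧ in₁ ≫ m = v} :=
    BinaryCofan.IsColimit.desc' hXX u v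
  have := hp.2 j hj hXXc (hXXc.of_cof hCof hj)
  have sq : CommSq m j p c := ⟨BinaryCofan.IsColimit.hom_ext hXX
    (by change in₀ ≫ m ≫ p = in₀ ≫ j ≫ c; rw [reassoc_of% hm₀, hc₀])
    (by change in₁ ≫ m ≫ p = in₁ ≫ j ≫ c; rw [reassoc_of% hm₁, hc₁])⟩
  exact ⟨sq.lift, by rw [sq.fac_left, hm₀], by rw [sq.fac_left, hm₁]⟩

lemma CylHomotopic.exists_lift [HasTerminal C] (hFib : IsFibClass Fib) {X Y YY P : C}
    (hY : Fibrant Fib Y) {W : WeakCylinder Cof Fib X} {f g : X ⟶ Y} (h : CylHomotopic W f g)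
    {pr₀ pr₁ : YY ⟶ Y} (hYY : IsLimit (BinaryFan.mk pr₀ pr₁)) (hYYf : Fibrant Fib YY)
    {π : P ⟶ YY} (hπ : Fib π) {c : X ⟶ P} (hc₀ : c ≫ π ≫ pr₀ = f) (hc₁ : c ≫ π ≫ pr₁ = f) :
    ∃ k : X ⟶ P, k ≫ π ≫ pr₀ = f ∧ k ≫ π ≫ pr₁ = g := by
  obtain ⟨H, hH₀, hH₁⟩ := h
  obtain ⟨c', hc'₀, hc'₁⟩ := W.exists_const hFib hY f
  -- lift the pair (constant homotopy, `H`) along `in₀ ≫ ι`, then restrict to the end `in₁`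
  obtain ⟨k, hk₀, hk₁⟩ := W.in₀_ι_acyclic.exists_lift_pair hFib hYY hYYf hπ
    (u := c') (v := H) (by rw [hc₀, Category.assoc, hc'₀]) (by rw [hc₁, Category.assoc, hH₀])
  exact ⟨W.in₁ ≫ W.ι ≫ k, by simp only [Category.assoc, hk₀, hc'₁],
    by simp only [Category.assoc, hk₁, hH₁]⟩

lemma PathHomotopic.exists_desc [HasInitial C] (hCof : IsCofClass Cof) {X Y XX I : C}
    (hX : Cofibrant Cof X) {P : WeakPath Cof Fib Y} {f g : X ⟶ Y} (h : PathHomotopic P f g)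
    {in₀ in₁ : X ⟶ XX} (hXX : IsColimit (BinaryCofan.mk in₀ in₁)) (hXXc : Cofibrant Cof XX)
    {j : XX ⟶ I} (hj : Cof j) {c : I ⟶ Y} (hc₀ : in₀ ≫ j ≫ c = f) (hc₁ : in₁ ≫ j ≫ c = f) :
    ∃ H : I ⟶ Y, in₀ ≫ j ≫ H = f ∧ in₁ ≫ j ≫ H = g := by
  obtain ⟨k, hk₀, hk₁⟩ := h
  obtain ⟨c', hc'₀, hc'₁⟩ := P.exists_const hCof hX f
  obtain ⟨H, hH₀, hH₁⟩ := P.π_pr₀_acyclic.exists_desc_pair hCof hXX hXXc hj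
    (u := c') (v := k) (by rw [hc₀, hc'₀]) (by rw [hc₁, hk₀])
  exact ⟨H ≫ P.π ≫ P.pr₁, by rw [reassoc_of% hH₀, hc'₁], by rw [reassoc_of% hH₁, hk₁]⟩

section

variable [HasInitial C] [HasTerminal C]

lemma WeakCylinder.cofibrant_XX (hCof : IsCofClass Cof) {X : C} (hX : Cofibrant Cof X)
    (W : WeakCylinder Cof Fib X) : Cofibrant Cof W.XX := by
  obtain ⟨Q, inl, inr, hQ, hinl⟩ :=
    hCof.pushout_mem (initial.to X) (initial.to X) hX hCof.initial_cofibrant hX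
  have hW : IsPushout (initial.to X) (initial.to X) W.in₀ W.in₁ := by
    simpa only [initial.hom_ext (initialIsInitial.to X) (initial.to X)] using
      IsPushout.of_is_coproduct' W.isCoprod initialIsInitial
  have hin₀ : Cof W.in₀ := by
    rw [← hW.inl_isoIsPushout_inv _ _ hQ]
    exact hCof.comp_mem _ _ hinl (hCof.iso_mem _ inferInstance (hX.of_cof hCof hinl))
  exact hX.of_cof hCof hin₀

lemma WeakPath.fibrant_YY (hFib : IsFibClass Fib) {Y : C} (hY : Fibrant Fib Y)
    (P : WeakPath Cof Fib Y) : Fibrant Fib P.YY := by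
  obtain ⟨Q, fst, snd, hQ, hfst⟩ :=
    hFib.pullback_mem (terminal.from Y) (terminal.from Y) hY hFib.terminal_fibrant hY
  have hP : IsPullback P.pr₀ P.pr₁ (terminal.from Y) (terminal.from Y) := by
    simpa only [terminal.hom_ext (terminalIsTerminal.from Y) (terminal.from Y)] using
      IsPullback.of_is_product' P.isProd terminalIsTerminal
  have hpr₀ : Fib P.pr₀ := by
    rw [← hP.isoIsPullback_hom_fst _ _ hQ]
    exact hFib.comp_mem _ _ (hFib.iso_mem _ inferInstance (hY.of_fib hFib hfst)) hfst
  exact hY.of_fib hFib hpr₀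

lemma CylHomotopic.pathHomotopic (hCof : IsCofClass Cof) (hFib : IsFibClass Fib) {X Y : C}
    (hX : Cofibrant Cof X) (hY : Fibrant Fib Y) {W : WeakCylinder Cof Fib X}
    (P : WeakPath Cof Fib Y) {f g : X ⟶ Y} (h : CylHomotopic W f g) :
    PathHomotopic P f g := by
  obtain ⟨c, hc₀, hc₁⟩ := P.exists_const hCof hX f
  exact h.exists_lift hFib hY P.isProd (P.fibrant_YY hFib hY) P.π_fib hc₀ hc₁

lemma PathHomotopic.cylHomotopic (hCof : IsCofClass Cof) (hFib : IsFibClass Fib) {X Y : C}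
    (hX : Cofibrant Cof X) (hY : Fibrant Fib Y) (W : WeakCylinder Cof Fib X)
    {P : WeakPath Cof Fib Y} {f g : X ⟶ Y} (h : PathHomotopic P f g) :
    CylHomotopic W f g := by
  obtain ⟨c, hc₀, hc₁⟩ := W.exists_const hFib hY f
  exact h.exists_desc hCof hX W.isCoprod (W.cofibrant_XX hCof hX) W.ι_cof hc₀ hc₁

lemma Homotopic.exists_cylHomotopic (hCof : IsCofClass Cof) (hFib : IsFibClass Fib)
    {X Y : C} (hX : Cofibrant Cof X) (hY : Fibrant Fib Y) (W : WeakCylinder Cof Fib X)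
    {f g : X ⟶ Y} (h : Homotopic Cof Fib f g) :
    ∃ W' : WeakCylinder Cof Fib X, CylHomotopic W' f g := by
  obtain h | ⟨P, h⟩ := h
  · exact h
  · exact ⟨W, h.cylHomotopic hCof hFib hX hY W⟩

lemma Homotopic.exists_pathHomotopic (hCof : IsCofClass Cof) (hFib : IsFibClass Fib)
    {X Y : C} (hX : Cofibrant Cof X) (hY : Fibrant Fib Y) (P : WeakPath Cof Fib Y)
    {f g : X ⟶ Y} (h : Homotopic Cof Fib f g) :
    ∃ P' : WeakPath Cof Fib Y, PathHomotopic P' f g := by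
  obtain ⟨W, h⟩ | h := h
  · exact ⟨P, h.pathHomotopic hCof hFib hX hY P⟩
  · exact h

lemma IsAcyclicCof.pathHomotopic_of_comp_eq (hCof : IsCofClass Cof) (hFib : IsFibClass Fib)
    {A B Y : C} {i : A ⟶ B} (hi : IsAcyclicCof Cof Fib i) (hA : Cofibrant Cof A)
    (hY : Fibrant Fib Y) (P : WeakPath Cof Fib Y) {u v : B ⟶ Y} (huv : i ≫ u = i ≫ v) :
    PathHomotopic P u v := by
  obtain ⟨c, hc₀, hc₁⟩ := P.exists_const hCof hA (i ≫ u)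
  exact hi.exists_lift_pair hFib P.isProd (P.fibrant_YY hFib hY) P.π_fib hc₀ (hc₁.trans huv)

lemma IsAcyclicFib.cylHomotopic_of_comp_eq (hCof : IsCofClass Cof) (hFib : IsFibClass Fib)
    {A X Y : C} {p : X ⟶ Y} (hp : IsAcyclicFib Cof Fib p) (hA : Cofibrant Cof A)
    (hY : Fibrant Fib Y) (W : WeakCylinder Cof Fib A) {u v : A ⟶ X} (huv : u ≫ p = v ≫ p) :
    CylHomotopic W u v := by
  obtain ⟨c, hc₀, hc₁⟩ := W.exists_const hFib hY (u ≫ p)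
  exact hp.exists_desc_pair hCof W.isCoprod (W.cofibrant_XX hCof hA) W.ι_cof hc₀
    (hc₁.trans huv)

lemma isInvertedBy_bfAcyclicCof (hCof : IsCofClass Cof) (hFib : IsFibClass Fib)
    (hpath : ∀ Y : BF Cof Fib, Nonempty (WeakPath Cof Fib Y.obj)) :
    (bfAcyclicCof Cof Fib).IsInvertedBy (Quotient.functor (homotopyRel Cof Fib)) := by
  intro X Y f (hf : IsAcyclicCof Cof Fib f.hom)
  obtain ⟨r, hr⟩ := hf.exists_extension hFib X.2.2 (𝟙 X.obj)
  obtain ⟨P⟩ := hpath Y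
  have hfr : f ≫ ObjectProperty.homMk r = 𝟙 X := by ext; exact hr
  have hrf : homotopyRel Cof Fib (ObjectProperty.homMk r ≫ f) (𝟙 Y) :=
    Or.inr ⟨P, hf.pathHomotopic_of_comp_eq hCof hFib X.2.1 Y.2.2 P (by simp [reassoc_of% hr])⟩
  exact ⟨(Quotient.functor _).map (ObjectProperty.homMk r),
    by rw [← Functor.map_comp, hfr, (Quotient.functor _).map_id],
    by rw [← Functor.map_comp, CategoryTheory.Quotient.sound _ hrf, (Quotient.functor _).map_id]⟩

lemma isInvertedBy_bfAcyclicFib (hCof : IsCofClass Cof) (hFib : IsFibClass Fib)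
    (hcyl : ∀ X : BF Cof Fib, Nonempty (WeakCylinder Cof Fib X.obj)) :
    (bfAcyclicFib Cof Fib).IsInvertedBy (Quotient.functor (homotopyRel Cof Fib)) := by
  intro X Y f (hf : IsAcyclicFib Cof Fib f.hom)
  obtain ⟨s, hs⟩ := hf.exists_lift hCof Y.2.1 (𝟙 Y.obj)
  obtain ⟨W⟩ := hcyl X
  have hsf : ObjectProperty.homMk s ≫ f = 𝟙 Y := by ext; exact hs
  have hfs : homotopyRel Cof Fib (f ≫ ObjectProperty.homMk s) (𝟙 X) :=
    Or.inl ⟨W, hf.cylHomotopic_of_comp_eq hCof hFib X.2.1 Y.2.2 W (by simp [hs])⟩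
  exact ⟨(Quotient.functor _).map (ObjectProperty.homMk s),
    by rw [← Functor.map_comp, CategoryTheory.Quotient.sound _ hfs, (Quotient.functor _).map_id],
    by rw [← Functor.map_comp, hsf, (Quotient.functor _).map_id]⟩

lemma exists_prepathObject (hCof : IsCofClass Cof) (hFib : IsFibClass Fib)
    (hfac : ∀ {X Y : C} (f : X ⟶ Y), Cofibrant Cof X → Fibrant Fib Y →
      ∃ (Z : C) (i : X ⟶ Z) (q : Z ⟶ Y), IsAcyclicCof Cof Fib i ∧ Fib q ∧ i ≫ q = f)
    {X Y : BF Cof Fib} (W : WeakCylinder Cof Fib X.obj) (P : WeakPath Cof Fib Y.obj)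
    {f g : X ⟶ Y} (h : homotopyRel Cof Fib f g) :
    ∃ (Q : PrepathObject Y) (_ : Q.RightHomotopy f g), bfAcyclicCof Cof Fib Q.ι := by
  have hYY := P.fibrant_YY hFib Y.2.2
  obtain ⟨d, hd₀, hd₁⟩ : {d : Y.obj ⟶ P.YY // d ≫ P.pr₀ = 𝟙 _ ∧ d ≫ P.pr₁ = 𝟙 _} :=
    BinaryFan.IsLimit.lift' P.isProd _ _
  obtain ⟨Z, ι, q, hι, hq, rfl⟩ := hfac d Y.2.1 hYY
  rw [Category.assoc] at hd₀ hd₁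
  obtain ⟨W', hW'⟩ := Homotopic.exists_cylHomotopic hCof hFib X.2.1 Y.2.2 W h
  obtain ⟨k, hk₀, hk₁⟩ := hW'.exists_lift hFib Y.2.2 P.isProd hYY hq (c := f.hom ≫ ι)
    (by simp [hd₀]) (by simp [hd₁])
  let Z' : BF Cof Fib := ⟨Z, Y.2.1.of_cof hCof hι.1, hYY.of_fib hFib hq⟩
  refine ⟨
    { P := Z'
      p₀ := ObjectProperty.homMk (q ≫ P.pr₀)
      p₁ := ObjectProperty.homMk (q ≫ P.pr₁)
      ι := ObjectProperty.homMk ι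
      ι_p₀ := by ext; simpa using hd₀
      ι_p₁ := by ext; simpa using hd₁ },
    { h := ObjectProperty.homMk k
      h₀ := by ext; exact hk₀
      h₁ := by ext; exact hk₁ }, hι⟩

lemma exists_precylinder (hCof : IsCofClass Cof) (hFib : IsFibClass Fib)
    (hfac : ∀ {X Y : C} (f : X ⟶ Y), Cofibrant Cof X → Fibrant Fib Y →
      ∃ (Z : C) (i : X ⟶ Z) (q : Z ⟶ Y), Cof i ∧ IsAcyclicFib Cof Fib q ∧ i ≫ q = f)
    {X Y : BF Cof Fib} (W : WeakCylinder Cof Fib X.obj) (P : WeakPath Cof Fib Y.obj)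
    {f g : X ⟶ Y} (h : homotopyRel Cof Fib f g) :
    ∃ (Q : Precylinder X) (_ : Q.LeftHomotopy f g), bfAcyclicFib Cof Fib Q.π := by
  have hXX := W.cofibrant_XX hCof X.2.1
  obtain ⟨d, hd₀, hd₁⟩ : {d : W.XX ⟶ X.obj // W.in₀ ≫ d = 𝟙 _ ∧ W.in₁ ≫ d = 𝟙 _} :=
    BinaryCofan.IsColimit.desc' W.isCoprod _ _
  obtain ⟨I, j, π, hj, hπ, rfl⟩ := hfac d hXX X.2.2
  obtain ⟨P', hP'⟩ := Homotopic.exists_pathHomotopic hCof hFib X.2.1 Y.2.2 P h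
  obtain ⟨H, hH₀, hH₁⟩ := hP'.exists_desc hCof X.2.1 W.isCoprod hXX hj (c := π ≫ f.hom)
    (by simp [reassoc_of% hd₀]) (by simp [reassoc_of% hd₁])
  let I' : BF Cof Fib := ⟨I, hXX.of_cof hCof hj, X.2.2.of_fib hFib hπ.1⟩
  refine ⟨
    { I := I'
      i₀ := ObjectProperty.homMk (W.in₀ ≫ j)
      i₁ := ObjectProperty.homMk (W.in₁ ≫ j)
      π := ObjectProperty.homMk π
      i₀_π := by ext; simpa using hd₀
      i₁_π := by ext; simpa using hd₁ },
    { h := ObjectProperty.homMk H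
      h₀ := by ext; simpa using hH₀
      h₁ := by ext; simpa using hH₁ }, hπ⟩

end

variable [HasInitial C] [HasTerminal C]

/-- the quotient functor from the category of bifibrant objects to its
quotient by the homotopy relation sends acyclic cofibrations to isomorphisms and
exhibits the quotient as the localization at the acyclic cofibrations, and dually as
the localization at the acyclic fibrations. -/
theorem statement3 (Cof Fib : MorphismProperty C)
    (hCof : IsCofClass Cof) (hFib : IsFibClass Fib)
    (hfac₁ : ∀ {X Y : C} (f : X ⟶ Y), Cofibrant Cof X → Fibrant Fib Y →
      ∃ (Z : C) (i : X ⟶ Z) (q : Z ⟶ Y), Cof i ∧ IsAcyclicFib Cof Fib q ∧ i ≫ q = f)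
    (hfac₂ : ∀ {X Y : C} (f : X ⟶ Y), Cofibrant Cof X → Fibrant Fib Y →
      ∃ (Z : C) (i : X ⟶ Z) (q : Z ⟶ Y), IsAcyclicCof Cof Fib i ∧ Fib q ∧ i ≫ q = f)
    (hcyl : ∀ X : C, Cofibrant Cof X → Fibrant Fib X → Nonempty (WeakCylinder Cof Fib X))
    (hpath : ∀ X : C, Cofibrant Cof X → Fibrant Fib X → Nonempty (WeakPath Cof Fib X)) :
    (∀ {X Y : BF Cof Fib} (f : X ⟶ Y), bfAcyclicCof Cof Fib f →
      IsIso ((Quotient.functor (homotopyRel Cof Fib)).map f)) ∧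
    (Quotient.functor (homotopyRel Cof Fib)).IsLocalization (bfAcyclicCof Cof Fib) ∧
    (Quotient.functor (homotopyRel Cof Fib)).IsLocalization (bfAcyclicFib Cof Fib) := by
  have hcyl' (X : BF Cof Fib) := hcyl X.obj X.2.1 X.2.2
  have hpath' (Y : BF Cof Fib) := hpath Y.obj Y.2.1 Y.2.2
  have hinvCof := isInvertedBy_bfAcyclicCof hCof hFib hpath'
  refine ⟨fun f hf => hinvCof f hf, ?_, ?_⟩
  · exact Quotient.isLocalization_functor_of_exists_pathObjects hinvCof fun X Y _ _ h =>
      exists_prepathObject hCof hFib hfac₂ (hcyl' X).some (hpath' Y).some h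
  · exact Quotient.isLocalization_functor _ _ (isInvertedBy_bfAcyclicFib hCof hFib hcyl')
      fun X Y _ _ h => exists_precylinder hCof hFib hfac₁ (hcyl' X).some (hpath' Y).some h

end WMC
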